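/- arXiv:2205.00430 — 2 statements merged into one kernel-verified Lean document; each statement's English description precedes it below -/
import Mathlib

section
/- Let p, q be relatively prime positive integers, let S²_{p,q} = S³_{p,q}/S¹ be the orbit space of the S¹-action e^{2πiθ}·(z,w) = (e^{2πipθ}z, e^{2πiqθ}w) with the quotient topology, and let U_N = {[z:w] ∈ S²_{p,q} : z ≠ 0}. The group Γ_{1/p} = {e^{2πik/p} : k ∈ ℤ} acts on B(p) = {w ∈ ℂ : |w|² < p} by complex multiplication, and the map B(p)/Γ_{1/p} → U_N sending the class [w] to the orbit [√(q − (q/p)|w|²) : w] is well defined and is a homeomorphism, where B(p)/Γ_{1/p} carries the quotient topology and U_N the subspace topology. -/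
open Complex

/-- `expc x = e^{2πix}`. -/
noncomputable def expc (x : ℝ) : ℂ := Complex.exp (2 * Real.pi * Complex.I * x)

/-- The ellipsoid `S³_{p,q} = {(z,w) ∈ ℂ² : p|z|² + q|w|² = pq}`. -/
def ellipsoid (p q : ℕ) : Set (ℂ × ℂ) :=
  {z | (p : ℝ) * ‖z.1‖ ^ 2 + (q : ℝ) * ‖z.2‖ ^ 2 = (p : ℝ) * (q : ℝ)}

/-- Orbit relation of the `S¹`-action `e^{2πiθ}·(z,w) = (e^{2πipθ}z, e^{2πiqθ}w)` on the
ellipsoid `S³_{p,q}`. -/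
noncomputable def orbitRel (p q : ℕ) (x y : ellipsoid p q) : Prop :=
  ∃ θ : ℝ, (y : ℂ × ℂ) =
    (expc ((p : ℝ) * θ) * (x : ℂ × ℂ).1, expc ((q : ℝ) * θ) * (x : ℂ × ℂ).2)

/-- The ball `B(p) = {w ∈ ℂ : |w|² < p}`. -/
def ball' (p : ℕ) : Set ℂ := {w | ‖w‖ ^ 2 < (p : ℝ)}

/-- Orbit relation of the action of `Γ_{1/p} = {e^{2πik/p} : k ∈ ℤ}` on `B(p)` by complex
multiplication. -/
noncomputable def ballRel (p : ℕ) (x y : ball' p) : Prop :=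
  ∃ k : ℤ, (y : ℂ) = expc ((k : ℝ) / (p : ℝ)) * (x : ℂ)

/-- `U_N = {[z:w] ∈ S²_{p,q} : z ≠ 0}`. -/
noncomputable def UN (p q : ℕ) : Set (Quot (orbitRel p q)) :=
  {o | ∃ x : ellipsoid p q, Quot.mk (orbitRel p q) x = o ∧ (x : ℂ × ℂ).1 ≠ 0}

/-!
A point `[z : w]` with `z ≠ 0` can be rotated by some `θ` so that `z` becomes the positive real
`|z| = √(q - (q/p)|w|²)`; this determines `e^{2πipθ}`, hence `θ` modulo `(1/p)ℤ`, so `e^{2πiqθ} w`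
is determined up to `Γ_{q/p} ⊆ Γ_{1/p}`. This gives the inverse `[z : w] ↦ [e^{2πiqθ} w]`; it is
continuous because locally `θ` can be chosen as a continuous branch of `-arg z / (2πp)` and `U_N`
is open in the quotient. Conversely, by coprimality every `e^{2πik/p}` equals `e^{2πiqθ}` for some
`θ` with `e^{2πipθ} = 1`, which makes the chart itself well defined.
-/

open scoped Real

lemma expc_zero : expc 0 = 1 := by simp [expc]

lemma expc_add (a b : ℝ) : expc (a + b) = expc a * expc b := by
  simp only [expc, ← Complex.exp_add]
  push_cast
  ring_nf

lemma expc_ne_zero (t : ℝ) : expc t ≠ 0 := Complex.exp_ne_zero _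

lemma norm_expc (t : ℝ) : ‖expc t‖ = 1 := by
  rw [expc, show 2 * π * I * (t : ℂ) = ((2 * π * t : ℝ) : ℂ) * I by push_cast; ring]
  exact norm_exp_ofReal_mul_I _

lemma expc_eq_expc_iff {a b : ℝ} : expc a = expc b ↔ ∃ n : ℤ, a = b + n := by
  have h2πI : (2 * π * I : ℂ) ≠ 0 := by simp [Real.pi_ne_zero, I_ne_zero]
  rw [expc, expc, exp_eq_exp_iff_exists_int]
  refine exists_congr fun n => ?_
  rw [show 2 * π * I * (b : ℂ) + n * (2 * π * I) = 2 * π * I * ((b + n : ℝ) : ℂ) by push_cast; ring,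
    mul_right_inj' h2πI, ofReal_inj]

lemma expc_intCast (n : ℤ) : expc n = 1 :=
  expc_zero ▸ expc_eq_expc_iff.2 ⟨n, (zero_add _).symm⟩

lemma continuous_expc : Continuous expc := by
  unfold expc
  fun_prop

noncomputable def normAngle (z : ℂ) : ℝ := -arg z / (2 * π)

lemma expc_normAngle_mul (z : ℂ) : expc (normAngle z) * z = ‖z‖ := by
  have h : 2 * π * I * ((-arg z / (2 * π) : ℝ) : ℂ) + arg z * I = 0 := by
    push_cast
    field_simp
    ring
  calc expc (normAngle z) * z = expc (normAngle z) * (‖z‖ * Complex.exp (arg z * I)) := by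
        rw [norm_mul_exp_arg_mul_I]
    _ = ‖z‖ := by
        rw [expc, normAngle, mul_left_comm, ← Complex.exp_add, h, Complex.exp_zero, mul_one]

lemma continuousAt_normAngle {z : ℂ} (hz : z ∈ slitPlane) : ContinuousAt normAngle z :=
  (continuousAt_arg hz).neg.div_const _

lemma expc_mul_normAngle_div {p : ℕ} (hp : p ≠ 0) (z : ℂ) :
    expc (p * (normAngle z / p)) * z = ‖z‖ := by
  rw [mul_div_cancel₀ _ (Nat.cast_ne_zero.2 hp), expc_normAngle_mul]

lemma exists_expc_eq_mul_of_expc_eq {p : ℕ} (hp : p ≠ 0) (q : ℕ) {θ₁ θ₂ : ℝ}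
    (h : expc (p * θ₁) = expc (p * θ₂)) :
    ∃ k : ℤ, expc (q * θ₁) = expc (k / p) * expc (q * θ₂) := by
  obtain ⟨n, hn⟩ := expc_eq_expc_iff.1 h
  refine ⟨q * n, ?_⟩
  rw [← expc_add]
  congr 1
  push_cast
  field_simp
  linear_combination (q : ℝ) * hn

lemma exists_expc_eq_one_and_expc_eq {p q : ℕ} (hp : p ≠ 0) (hpq : p.Coprime q) (k : ℤ) :
    ∃ θ : ℝ, expc (p * θ) = 1 ∧ expc (q * θ) = expc (k / p) := by
  have hbezout : (p : ℝ) * p.gcdA q + q * p.gcdB q = 1 := by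
    exact_mod_cast (Nat.gcd_eq_gcd_ab p q).symm.trans (by rw [hpq]; rfl)
  refine ⟨p.gcdB q * k / p, ?_, ?_⟩
  · rw [mul_div_cancel₀ _ (Nat.cast_ne_zero.2 hp)]
    exact_mod_cast expc_intCast _
  · refine expc_eq_expc_iff.2 ⟨-(p.gcdA q * k), ?_⟩
    push_cast
    field_simp
    linear_combination (k : ℝ) * hbezout

section Chart

variable {p q : ℕ}

lemma expc_mul_mem_ball' {t : ℝ} {w : ℂ} : expc t * w ∈ ball' p ↔ w ∈ ball' p := by
  simp only [ball', Set.mem_ofPred_eq, norm_mul, norm_expc, one_mul]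

lemma snd_mem_ball' (hp : 0 < p) (hq : 0 < q) {x : ℂ × ℂ} (hx : x ∈ ellipsoid p q)
    (hx₁ : x.1 ≠ 0) : x.2 ∈ ball' p := by
  have : 0 < ‖x.1‖ ^ 2 := by positivity
  have hp' : (0 : ℝ) < p := Nat.cast_pos.2 hp
  have hq' : (0 : ℝ) < q := Nat.cast_pos.2 hq
  simp only [ellipsoid, ball', Set.mem_ofPred_eq] at hx ⊢
  nlinarith

lemma sq_norm_fst_of_mem_ellipsoid (hp : p ≠ 0) {x : ℂ × ℂ} (hx : x ∈ ellipsoid p q) :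
    ‖x.1‖ ^ 2 = q - q / p * ‖x.2‖ ^ 2 := by
  have hp' : (p : ℝ) ≠ 0 := Nat.cast_ne_zero.2 hp
  simp only [ellipsoid, Set.mem_ofPred_eq] at hx
  field_simp
  linear_combination hx

lemma sub_div_mul_sq_norm_nonneg {w : ℂ} (hw : w ∈ ball' p) :
    0 ≤ (q : ℝ) - q / p * ‖w‖ ^ 2 := by
  have hp : (0 : ℝ) < p := (sq_nonneg _).trans_lt hw
  rw [div_mul_eq_mul_div, sub_nonneg, div_le_iff₀ hp]
  exact mul_le_mul_of_nonneg_left (le_of_lt hw) (Nat.cast_nonneg q)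

lemma sub_div_mul_sq_norm_pos (hq : 0 < q) {w : ℂ} (hw : w ∈ ball' p) :
    0 < (q : ℝ) - q / p * ‖w‖ ^ 2 := by
  have hp : (0 : ℝ) < p := (sq_nonneg _).trans_lt hw
  rw [div_mul_eq_mul_div, sub_pos, div_lt_iff₀ hp]
  exact mul_lt_mul_of_pos_left hw (Nat.cast_pos.2 hq)

variable (q) in
noncomputable def ellipsoidSection (w : ball' p) : ellipsoid p q :=
  ⟨((Real.sqrt ((q : ℝ) - q / p * ‖(w : ℂ)‖ ^ 2) : ℂ), (w : ℂ)), by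
    simp only [ellipsoid, Set.mem_ofPred_eq, norm_real, Real.norm_eq_abs, sq_abs,
      Real.sq_sqrt (sub_div_mul_sq_norm_nonneg w.2)]
    have hp : (p : ℝ) ≠ 0 := ((sq_nonneg _).trans_lt w.2).ne'
    field_simp
    ring⟩

@[simp]
lemma coe_ellipsoidSection (w : ball' p) :
    (ellipsoidSection q w : ℂ × ℂ) = ((Real.sqrt ((q : ℝ) - q / p * ‖(w : ℂ)‖ ^ 2) : ℂ), (w : ℂ)) :=
  rfl

lemma ellipsoidSection_fst_ne_zero (hq : 0 < q) (w : ball' p) :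
    (ellipsoidSection q w : ℂ × ℂ).1 ≠ 0 := by
  simpa [Real.sqrt_eq_zero'] using sub_div_mul_sq_norm_pos hq w.2

lemma continuous_ellipsoidSection : Continuous (ellipsoidSection (p := p) q) := by
  unfold ellipsoidSection
  fun_prop

lemma orbitRel.fst_eq_zero_iff {x y : ellipsoid p q} (h : orbitRel p q x y) :
    (y : ℂ × ℂ).1 = 0 ↔ (x : ℂ × ℂ).1 = 0 := by
  obtain ⟨θ, hθ⟩ := h
  rw [hθ, mul_eq_zero, or_iff_right (expc_ne_zero _)]

lemma mk_mem_UN {x : ellipsoid p q} : Quot.mk (orbitRel p q) x ∈ UN p q ↔ (x : ℂ × ℂ).1 ≠ 0 := by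
  refine ⟨fun ⟨y, hy, hy₁⟩ => ?_, fun hx => ⟨x, rfl, hx⟩⟩
  let fstNeZero : Quot (orbitRel p q) → Prop := Quot.lift (fun x => (x : ℂ × ℂ).1 ≠ 0)
    fun _ _ h => propext (orbitRel.fst_eq_zero_iff h).not.symm
  exact (congrArg fstNeZero hy).mp hy₁

lemma isOpen_UN : IsOpen (UN p q) := by
  rw [← isQuotientMap_quot_mk.isOpen_preimage,
    show Quot.mk (orbitRel p q) ⁻¹' UN p q = {x : ellipsoid p q | (x : ℂ × ℂ).1 ≠ 0} from
      Set.ext fun _ => mk_mem_UN]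
  exact isOpen_ne_fun (by fun_prop) continuous_const

lemma orbitRel_ellipsoidSection (hp : p ≠ 0) (hpq : p.Coprime q) {v w : ball' p}
    (h : ballRel p v w) : orbitRel p q (ellipsoidSection q v) (ellipsoidSection q w) := by
  obtain ⟨k, hk⟩ := h
  obtain ⟨θ, hpθ, hqθ⟩ := exists_expc_eq_one_and_expc_eq hp hpq k
  refine ⟨θ, Prod.ext ?_ ?_⟩
  · simp only [coe_ellipsoidSection, hpθ, one_mul, hk, norm_mul, norm_expc]
  · simp only [coe_ellipsoidSection, hqθ, hk]

lemma orbitRel_ellipsoidSection_expc_mul (hp : p ≠ 0) (x : ellipsoid p q) {θ : ℝ}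
    (hθ : expc (p * θ) * (x : ℂ × ℂ).1 = ‖(x : ℂ × ℂ).1‖)
    (hw : expc (q * θ) * (x : ℂ × ℂ).2 ∈ ball' p) :
    orbitRel p q x (ellipsoidSection q ⟨_, hw⟩) := by
  refine ⟨θ, Prod.ext ?_ rfl⟩
  rw [coe_ellipsoidSection, hθ, norm_mul, norm_expc, one_mul,
    ← sq_norm_fst_of_mem_ellipsoid hp x.2, Real.sqrt_sq (norm_nonneg _)]

variable (hp : 0 < p) (hq : 0 < q)

/-- Only the values on `{z ≠ 0}` matter; the value `[0]` elsewhere is a placeholder. -/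
noncomputable def toBallQuot (x : ellipsoid p q) : Quot (ballRel p) :=
  if hx : (x : ℂ × ℂ).1 = 0 then Quot.mk _ ⟨0, by simpa [ball'] using hp⟩
  else Quot.mk _ ⟨expc (q * (normAngle (x : ℂ × ℂ).1 / p)) * (x : ℂ × ℂ).2,
    expc_mul_mem_ball'.2 (snd_mem_ball' hp hq x.2 hx)⟩

lemma toBallQuot_eq {x : ellipsoid p q} (hx : (x : ℂ × ℂ).1 ≠ 0) {θ : ℝ}
    (hθ : expc (p * θ) * (x : ℂ × ℂ).1 = ‖(x : ℂ × ℂ).1‖) :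
    toBallQuot hp hq x = Quot.mk _ ⟨expc (q * θ) * (x : ℂ × ℂ).2,
      expc_mul_mem_ball'.2 (snd_mem_ball' hp hq x.2 hx)⟩ := by
  rw [toBallQuot, dif_neg hx]
  obtain ⟨k, hk⟩ := exists_expc_eq_mul_of_expc_eq hp.ne' q
    (mul_right_cancel₀ hx ((expc_mul_normAngle_div hp.ne' _).trans hθ.symm))
  exact (Quot.sound ⟨k, show _ * _ = _ * (_ * _) by rw [hk, mul_assoc]⟩).symm

lemma toBallQuot_respects {x y : ellipsoid p q} (h : orbitRel p q x y) :
    toBallQuot hp hq x = toBallQuot hp hq y := by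
  by_cases hx : (x : ℂ × ℂ).1 = 0
  · rw [toBallQuot, toBallQuot, dif_pos hx, dif_pos ((orbitRel.fst_eq_zero_iff h).2 hx)]
  have hy : (y : ℂ × ℂ).1 ≠ 0 := (orbitRel.fst_eq_zero_iff h).not.2 hx
  obtain ⟨θ, hθ⟩ := h
  have hy₁ : (y : ℂ × ℂ).1 = expc (p * θ) * (x : ℂ × ℂ).1 := by rw [hθ]
  have hy₂ : (y : ℂ × ℂ).2 = expc (q * θ) * (x : ℂ × ℂ).2 := by rw [hθ]
  set α := normAngle (y : ℂ × ℂ).1 / p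
  have hα : expc (p * α) * (y : ℂ × ℂ).1 = ‖(y : ℂ × ℂ).1‖ := expc_mul_normAngle_div hp.ne' _
  have hαθ : expc (p * (α + θ)) * (x : ℂ × ℂ).1 = ‖(x : ℂ × ℂ).1‖ := by
    rw [mul_add, expc_add, mul_assoc, ← hy₁, hα, hy₁, norm_mul, norm_expc, one_mul]
  rw [toBallQuot_eq hp hq hx hαθ, toBallQuot_eq hp hq hy hα]
  congr 2
  rw [hy₂, mul_add, expc_add, mul_assoc]

lemma continuous_domRestrict_toBallQuot :
    Continuous ((Quot.mk (orbitRel p q) ⁻¹' UN p q).domRestrict (toBallQuot hp hq)) := by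
  refine continuous_iff_continuousAt.2 fun x₀ => ?_
  set c := ((x₀ : ellipsoid p q) : ℂ × ℂ).1
  have hc : c ≠ 0 := mk_mem_UN.1 x₀.2
  -- a choice of normalizing angle that is continuous at `c`, where `z / c` is in the slit plane
  let θ : ℂ → ℝ := fun z => (normAngle (z / c) + normAngle c) / p
  have hθ (z : ℂ) : expc (p * θ z) * z = ‖z‖ := by
    rw [mul_div_cancel₀ _ (Nat.cast_ne_zero.2 hp.ne'), expc_add]
    calc expc (normAngle (z / c)) * expc (normAngle c) * z
        = expc (normAngle (z / c)) * (z / c) * (expc (normAngle c) * c) := by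
          field_simp
      _ = ‖z‖ := by
          rw [expc_normAngle_mul, expc_normAngle_mul, ← ofReal_mul, ← norm_mul,
            div_mul_cancel₀ _ hc]
  have hθc : ContinuousAt θ c :=
    ((ContinuousAt.comp (f := fun z => z / c) (continuousAt_normAngle (by simp [hc]))
      (continuousAt_id.div_const c)).add continuousAt_const).div_const _
  rw [show (Quot.mk (orbitRel p q) ⁻¹' UN p q).domRestrict (toBallQuot hp hq) =
      fun x => Quot.mk _ ⟨expc (q * θ ((x : ellipsoid p q) : ℂ × ℂ).1) *
        ((x : ellipsoid p q) : ℂ × ℂ).2,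
        expc_mul_mem_ball'.2 (snd_mem_ball' hp hq x.1.2 (mk_mem_UN.1 x.2))⟩ from
    funext fun x => toBallQuot_eq hp hq (mk_mem_UN.1 x.2) (hθ _)]
  refine continuous_quot_mk.continuousAt.comp (ContinuousAt.codRestrict _ ?_)
  have hfst : Continuous fun x : Quot.mk (orbitRel p q) ⁻¹' UN p q =>
      ((x : ellipsoid p q) : ℂ × ℂ).1 := by fun_prop
  have hsnd : Continuous fun x : Quot.mk (orbitRel p q) ⁻¹' UN p q =>
      ((x : ellipsoid p q) : ℂ × ℂ).2 := by fun_prop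
  refine (continuous_expc.continuousAt.comp' ?_).mul hsnd.continuousAt
  exact continuousAt_const.mul (ContinuousAt.comp' (g := θ) hθc hfst.continuousAt)

noncomputable def chartInv (u : UN p q) : Quot (ballRel p) :=
  Quot.lift (toBallQuot hp hq) (fun _ _ => toBallQuot_respects hp hq) u.1

lemma continuous_chartInv : Continuous (chartInv hp hq) := by
  rw [(isQuotientMap_quot_mk.restrictPreimage_isOpen isOpen_UN).continuous_iff]
  exact continuous_domRestrict_toBallQuot hp hq

variable (hpq : p.Coprime q)

noncomputable def chart : Quot (ballRel p) → UN p q :=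
  Quot.lift
    (fun w => ⟨Quot.mk _ (ellipsoidSection q w), mk_mem_UN.2 (ellipsoidSection_fst_ne_zero hq w)⟩)
    fun _ _ h => Subtype.ext (Quot.sound (orbitRel_ellipsoidSection hp.ne' hpq h))

lemma continuous_chart : Continuous (chart hp hq hpq) :=
  continuous_quot_lift _ ((continuous_quot_mk.comp continuous_ellipsoidSection).subtype_mk _)

lemma chartInv_chart (a : Quot (ballRel p)) : chartInv hp hq (chart hp hq hpq a) = a := by
  induction a using Quot.ind with
  | mk w =>
    refine (toBallQuot_eq hp hq (ellipsoidSection_fst_ne_zero hq w) (θ := 0) ?_).trans ?_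
    · simp [expc_zero, abs_of_nonneg (Real.sqrt_nonneg _)]
    · exact congrArg _ (Subtype.ext (by simp [expc_zero]))

lemma chart_chartInv (u : UN p q) : chart hp hq hpq (chartInv hp hq u) = u := by
  obtain ⟨_, x, rfl, hx⟩ := u
  have hθ := expc_mul_normAngle_div hp.ne' (x : ℂ × ℂ).1
  refine Subtype.ext ?_
  change (chart hp hq hpq (toBallQuot hp hq x)).1 = _
  rw [toBallQuot_eq hp hq hx hθ]
  exact (Quot.sound (orbitRel_ellipsoidSection_expc_mul hp.ne' x hθ _)).symm

end Chart

/-- For `p, q` relatively prime positive integers, `Γ_{1/p}` acts on `B(p)` by complex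
multiplication, and the map `B(p)/Γ_{1/p} → U_N`, `[w] ↦ [√(q − (q/p)|w|²) : w]`, is well
defined and a homeomorphism (quotient topology on the source, subspace topology from the
quotient topology on the target). -/
theorem orbisphere_chart_N (p q : ℕ) (hp : 0 < p) (hq : 0 < q) (hpq : Nat.Coprime p q) :
    (∀ w : ℂ, w ∈ ball' p → ∀ k : ℤ, expc ((k : ℝ) / (p : ℝ)) * w ∈ ball' p) ∧
    ∃ h : Quot (ballRel p) ≃ₜ UN p q,
      ∀ (w : ℂ) (hw : w ∈ ball' p) (x : ellipsoid p q),
        (x : ℂ × ℂ) =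
            ((Real.sqrt ((q : ℝ) - (q : ℝ) / (p : ℝ) * ‖w‖ ^ 2) : ℂ), w) →
          (h (Quot.mk (ballRel p) ⟨w, hw⟩) : Quot (orbitRel p q)) =
            Quot.mk (orbitRel p q) x := by
  refine ⟨fun w hw _ => expc_mul_mem_ball'.2 hw,
    { toFun := chart hp hq hpq
      invFun := chartInv hp hq
      left_inv := chartInv_chart hp hq hpq
      right_inv := chart_chartInv hp hq hpq
      continuous_toFun := continuous_chart hp hq hpq
      continuous_invFun := continuous_chartInv hp hq },
    fun w hw x hx => ?_⟩
  exact congrArg (Quot.mk _) (Subtype.ext hx.symm)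
end

section
/- Let s, t be positive real numbers with s/t irrational, let S²_{s,t} = S³_{s,t}/N be the orbit space of the ellipsoid under the componentwise action of N = {(e^{2πisθ}, e^{2πitθ}) : θ ∈ ℝ}, with the quotient topology, and let U_N = {[z:w] ∈ S²_{s,t} : z ≠ 0}. The countable group Γ_{t/s} = {e^{2πikt/s} : k ∈ ℤ} acts on B(s) = {w ∈ ℂ : |w|² < s} by complex multiplication, and the map B(s)/Γ_{t/s} → U_N sending the class [w] to the orbit [√(t − (t/s)|w|²) : w] is well defined and is a homeomorphism, where B(s)/Γ_{t/s} carries the quotient topology and U_N the subspace topology. -/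
open Complex

/-- The ellipsoid `S³_{s,t} = {(z,w) ∈ ℂ² : s|z|² + t|w|² = st}`. -/
def ellipsoidR (s t : ℝ) : Set (ℂ × ℂ) :=
  {z | s * ‖z.1‖ ^ 2 + t * ‖z.2‖ ^ 2 = s * t}

/-- Orbit relation of the componentwise action of `N = {(e^{2πisθ}, e^{2πitθ}) : θ ∈ ℝ}`
on the ellipsoid `S³_{s,t}`. -/
noncomputable def orbitRelR (s t : ℝ) (x y : ellipsoidR s t) : Prop :=
  ∃ θ : ℝ, (y : ℂ × ℂ) = (expc (s * θ) * (x : ℂ × ℂ).1, expc (t * θ) * (x : ℂ × ℂ).2)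

/-- The ball `B(s) = {w ∈ ℂ : |w|² < s}`. -/
def ballR (s : ℝ) : Set ℂ := {w | ‖w‖ ^ 2 < s}

/-- Orbit relation of the action of `Γ_{t/s} = {e^{2πikt/s} : k ∈ ℤ}` on `B(s)` by complex
multiplication. -/
noncomputable def ballRelR' (s t : ℝ) (x y : ballR s) : Prop :=
  ∃ k : ℤ, (y : ℂ) = expc ((k : ℝ) * (t / s)) * (x : ℂ)

/-- `U_N = {[z:w] ∈ S²_{s,t} : z ≠ 0}`. -/
noncomputable def UNR (s t : ℝ) : Set (Quot (orbitRelR s t)) :=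
  {o | ∃ x : ellipsoidR s t, Quot.mk (orbitRelR s t) x = o ∧ (x : ℂ × ℂ).1 ≠ 0}

/-!
The slice `w ↦ (√(t - (t/s)|w|²), w)` of the ellipsoid over `B(s)` meets every `N`-orbit with
`z ≠ 0`: the element of `N` with `θ = arg z / 2πs` turns `z` into `|z|` and `w` into
`e^{-i(t/s) arg z} w`. Two points of the slice lie in one `N`-orbit exactly when the connecting
element fixes the positive first coordinate, i.e. `sθ ∈ ℤ`, i.e. when their second coordinates
differ by an element of `Γ_{t/s}`. Hence the slice induces a continuous bijection
`B(s)/Γ_{t/s} → U_N`. It is a homeomorphism because `U_N` is open in `S²_{s,t}`, so it carries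
the quotient topology of `{z ≠ 0} ⊆ S³_{s,t}`, and on `{z ≠ 0}` the map
`(z, w) ↦ [e^{-i(t/s) arg z} w]`, which recovers the slice point, is continuous: moving `arg z`
by `2π` moves the result within its `Γ_{t/s}`-orbit, so near any point `arg z` may be replaced by
a continuous branch.
-/

namespace QuasisphereChart

open Real Function Topology

lemma expc_add (a b : ℝ) : expc (a + b) = expc a * expc b := by
  rw [expc, expc, expc, ← Complex.exp_add]
  push_cast
  ring_nf

lemma expc_eq_one_iff (x : ℝ) : expc x = 1 ↔ ∃ k : ℤ, x = k := by
  rw [expc, Complex.exp_eq_one_iff]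
  refine exists_congr fun k => ⟨fun h => ?_, fun h => by rw [h]; push_cast; ring⟩
  have h2πI : 2 * (π : ℂ) * I ≠ 0 := by simp [Real.pi_ne_zero]
  exact_mod_cast mul_left_cancel₀ h2πI (h.trans (mul_comm _ _))

lemma expc_zero : expc 0 = 1 := by simp [expc]

lemma norm_expc (x : ℝ) : ‖expc x‖ = 1 := by
  rw [expc, show 2 * (π : ℂ) * I * x = ((2 * π * x : ℝ) : ℂ) * I by push_cast; ring]
  exact Complex.norm_exp_ofReal_mul_I _

lemma continuous_expc : Continuous expc := by
  unfold expc
  fun_prop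

lemma expc_arg_div_mul_norm (z : ℂ) : expc (arg z / (2 * π)) * ‖z‖ = z := by
  conv_rhs => rw [← Complex.norm_mul_exp_arg_mul_I z]
  rw [mul_comm, expc]
  congr 2
  push_cast
  field_simp

variable {s t : ℝ}

lemma norm_expc_mul (r : ℝ) (w : ℂ) : ‖expc r * w‖ = ‖w‖ := by
  rw [norm_mul, norm_expc, one_mul]

lemma expc_mul_mem_ballR_iff (r : ℝ) (w : ℂ) : expc r * w ∈ ballR s ↔ w ∈ ballR s := by
  simp only [ballR, Set.mem_ofPred_eq, norm_expc_mul]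

lemma equivalence_orbitRelR : Equivalence (orbitRelR s t) where
  refl x := ⟨0, by simp [expc_zero]⟩
  symm := by
    rintro x y ⟨θ, h⟩
    refine ⟨-θ, ?_⟩
    simp only [h, ← mul_assoc, ← expc_add, mul_neg, neg_add_cancel, expc_zero, one_mul]
  trans := by
    rintro x y z ⟨θ₁, h₁⟩ ⟨θ₂, h₂⟩
    refine ⟨θ₁ + θ₂, ?_⟩
    rw [h₂, h₁]
    simp only [← mul_assoc, ← expc_add, mul_add, add_comm]

lemma mk_mem_UNR_iff (x : ellipsoidR s t) :
    Quot.mk (orbitRelR s t) x ∈ UNR s t ↔ (x : ℂ × ℂ).1 ≠ 0 := by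
  refine ⟨fun ⟨y, hyx, hy⟩ => ?_, fun hx => ⟨x, rfl, hx⟩⟩
  obtain ⟨θ, hθ⟩ := equivalence_orbitRelR.eqvGen_iff.mp (Quot.eqvGen_exact hyx)
  rw [congrArg Prod.fst hθ]
  exact mul_ne_zero (Complex.exp_ne_zero _) hy

variable (s t) in
abbrev UNRPreimage : Set (ellipsoidR s t) := Quot.mk (orbitRelR s t) ⁻¹' UNR s t

lemma fst_ne_zero_of_mem_UNRPreimage (x : UNRPreimage s t) :
    ((x : ellipsoidR s t) : ℂ × ℂ).1 ≠ 0 :=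
  (mk_mem_UNR_iff _).1 x.2

lemma isOpen_UNR : IsOpen (UNR s t) := by
  rw [← isQuotientMap_quot_mk.isOpen_preimage]
  change IsOpen (UNRPreimage s t)
  rw [show UNRPreimage s t = {x : ellipsoidR s t | (x : ℂ × ℂ).1 ≠ 0} from
    Set.ext mk_mem_UNR_iff]
  exact isOpen_compl_singleton.preimage (continuous_fst.comp continuous_subtype_val)

lemma snd_mem_ballR_of_fst_ne_zero (hs : 0 < s) (ht : 0 < t) (x : ellipsoidR s t)
    (hx : (x : ℂ × ℂ).1 ≠ 0) : (x : ℂ × ℂ).2 ∈ ballR s := by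
  have hE : s * ‖(x : ℂ × ℂ).1‖ ^ 2 + t * ‖(x : ℂ × ℂ).2‖ ^ 2 = s * t := x.2
  have h1 : 0 < ‖(x : ℂ × ℂ).1‖ := norm_pos_iff.mpr hx
  show ‖(x : ℂ × ℂ).2‖ ^ 2 < s
  nlinarith [mul_pos hs (pow_pos h1 2)]

lemma sub_pos_of_mem_ballR (hs : 0 < s) (ht : 0 < t) {w : ℂ} (hw : w ∈ ballR s) :
    0 < t - t / s * ‖w‖ ^ 2 := by
  have hw' : ‖w‖ ^ 2 < s := hw
  rw [div_mul_eq_mul_div, sub_pos, div_lt_iff₀ hs]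
  exact mul_lt_mul_of_pos_left hw' ht

noncomputable def toEllipsoid (hs : 0 < s) (ht : 0 < t) (w : ballR s) : ellipsoidR s t :=
  ⟨((√(t - t / s * ‖(w : ℂ)‖ ^ 2) : ℂ), w), by
    show s * ‖(_ : ℂ)‖ ^ 2 + t * ‖(w : ℂ)‖ ^ 2 = s * t
    rw [Complex.norm_of_nonneg (Real.sqrt_nonneg _),
      Real.sq_sqrt (sub_pos_of_mem_ballR hs ht w.2).le]
    field_simp
    ring⟩

lemma toEllipsoid_fst_pos (hs : 0 < s) (ht : 0 < t) (w : ballR s) :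
    0 < √(t - t / s * ‖(w : ℂ)‖ ^ 2) :=
  Real.sqrt_pos.mpr (sub_pos_of_mem_ballR hs ht w.2)

lemma continuous_toEllipsoid (hs : 0 < s) (ht : 0 < t) : Continuous (toEllipsoid hs ht) := by
  refine Continuous.subtype_mk (Continuous.prodMk ?_ continuous_subtype_val) _
  fun_prop

lemma orbitRelR_toEllipsoid_iff (hs : 0 < s) (ht : 0 < t) (a b : ballR s) :
    orbitRelR s t (toEllipsoid hs ht a) (toEllipsoid hs ht b) ↔ ballRelR' s t a b := by
  have hsne : s ≠ 0 := hs.ne'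
  constructor
  · rintro ⟨θ, hθ⟩
    have hsnd : (b : ℂ) = expc (t * θ) * a := congrArg Prod.snd hθ
    have hfst : (√(t - t / s * ‖(b : ℂ)‖ ^ 2) : ℂ) =
        expc (s * θ) * √(t - t / s * ‖(a : ℂ)‖ ^ 2) :=
      congrArg Prod.fst hθ
    rw [hsnd, norm_expc_mul] at hfst
    have hone : expc (s * θ) = 1 := by
      have hne : (√(t - t / s * ‖(a : ℂ)‖ ^ 2) : ℂ) ≠ 0 :=
        Complex.ofReal_ne_zero.mpr (toEllipsoid_fst_pos hs ht a).ne'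
      simpa [hne] using hfst.symm
    obtain ⟨k, hk⟩ := (expc_eq_one_iff _).1 hone
    refine ⟨k, ?_⟩
    rw [hsnd, ← hk]
    congr 2
    field_simp
  · rintro ⟨k, hk⟩
    refine ⟨k / s, Prod.ext ?_ ?_⟩
    · simp only [toEllipsoid, hk, norm_expc_mul]
      rw [mul_div_cancel₀ _ hsne, (expc_eq_one_iff _).2 ⟨k, rfl⟩, one_mul]
    · simp only [toEllipsoid, hk]
      congr 2
      field_simp

noncomputable def chartMap (hs : 0 < s) (ht : 0 < t) : Quot (ballRelR' s t) → UNR s t :=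
  Quot.lift
    (fun w => ⟨Quot.mk _ (toEllipsoid hs ht w),
      (mk_mem_UNR_iff _).2 (Complex.ofReal_ne_zero.2 (toEllipsoid_fst_pos hs ht w).ne')⟩)
    fun a b hab => Subtype.ext (Quot.sound ((orbitRelR_toEllipsoid_iff hs ht a b).2 hab))

lemma continuous_chartMap (hs : 0 < s) (ht : 0 < t) : Continuous (chartMap hs ht) :=
  continuous_quot_lift _ <| Continuous.subtype_mk
    (continuous_quot_mk.comp (continuous_toEllipsoid hs ht)) _

lemma chartMap_injective (hs : 0 < s) (ht : 0 < t) : Injective (chartMap hs ht) := by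
  rintro ⟨a⟩ ⟨b⟩ hab
  have hmk : Quot.mk (orbitRelR s t) (toEllipsoid hs ht a) = Quot.mk _ (toEllipsoid hs ht b) :=
    congrArg Subtype.val hab
  exact Quot.sound ((orbitRelR_toEllipsoid_iff hs ht a b).1
    (equivalence_orbitRelR.eqvGen_iff.mp (Quot.eqvGen_exact hmk)))

variable (s t) in
noncomputable def twist (θ : ℝ) (w : ℂ) : ℂ := expc (-(t / s) * (θ / (2 * π))) * w

lemma continuous_twist : Continuous fun p : ℝ × ℂ => twist s t p.1 p.2 :=
  (continuous_expc.comp (by fun_prop)).mul continuous_snd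

lemma twist_mem_ballR_iff (θ : ℝ) (w : ℂ) : twist s t θ w ∈ ballR s ↔ w ∈ ballR s :=
  expc_mul_mem_ballR_iff _ w

variable (s t) in
noncomputable def twistClass (θ : ℝ) (w : ballR s) : Quot (ballRelR' s t) :=
  Quot.mk _ ⟨twist s t θ w, (twist_mem_ballR_iff θ w).2 w.2⟩

lemma twistClass_eq_of_coe_eq {θ θ' : ℝ} (h : (θ : Real.Angle) = θ') (w : ballR s) :
    twistClass s t θ w = twistClass s t θ' w := by
  obtain ⟨m, hm⟩ := Real.Angle.angle_eq_iff_two_pi_dvd_sub.1 h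
  refine (Quot.sound ⟨-m, ?_⟩).symm
  simp only [twist, ← mul_assoc, ← expc_add]
  congr 2
  rw [eq_add_of_sub_eq hm]
  push_cast
  field_simp
  ring

lemma continuous_twistClass : Continuous fun p : ℝ × ballR s => twistClass s t p.1 p.2 :=
  continuous_quot_mk.comp <| Continuous.subtype_mk
    (continuous_twist.comp (continuous_fst.prodMk (continuous_subtype_val.comp continuous_snd))) _

noncomputable def sndBall (hs : 0 < s) (ht : 0 < t) (x : UNRPreimage s t) : ballR s :=
  ⟨_, snd_mem_ballR_of_fst_ne_zero hs ht _ (fst_ne_zero_of_mem_UNRPreimage x)⟩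

lemma continuous_sndBall (hs : 0 < s) (ht : 0 < t) : Continuous (sndBall hs ht) :=
  Continuous.subtype_mk (continuous_snd.comp (continuous_subtype_val.comp continuous_subtype_val)) _

noncomputable def straighten (hs : 0 < s) (ht : 0 < t)
    (x : UNRPreimage s t) : Quot (ballRelR' s t) :=
  twistClass s t (arg ((x : ellipsoidR s t) : ℂ × ℂ).1) (sndBall hs ht x)

lemma continuous_straighten (hs : 0 < s) (ht : 0 < t) : Continuous (straighten hs ht) := by
  rw [continuous_iff_continuousAt]
  intro x₀
  have hz₀ := fst_ne_zero_of_mem_UNRPreimage x₀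
  generalize hz₀def : ((x₀ : ellipsoidR s t) : ℂ × ℂ).1 = z₀ at hz₀
  -- `arg (z / z₀) + arg z₀` is a branch of `arg z` that is continuous at `x₀`
  have hbranch : ∀ x : UNRPreimage s t, straighten hs ht x =
      twistClass s t (arg (((x : ellipsoidR s t) : ℂ × ℂ).1 / z₀) + arg z₀)
        (sndBall hs ht x) := by
    intro x
    refine twistClass_eq_of_coe_eq ?_ _
    rw [Real.Angle.coe_add, Complex.arg_div_coe_angle (fst_ne_zero_of_mem_UNRPreimage x) hz₀,
      sub_add_cancel]
  have harg : ContinuousAt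
      (fun x : UNRPreimage s t => arg (((x : ellipsoidR s t) : ℂ × ℂ).1 / z₀)) x₀ := by
    refine (Complex.continuousAt_arg ?_).comp (Continuous.continuousAt ?_)
    · rw [hz₀def, div_self hz₀]
      exact Complex.one_mem_slitPlane
    · exact (continuous_fst.comp (continuous_subtype_val.comp continuous_subtype_val)).div_const _
  have hcont := ContinuousAt.comp (x := x₀)
    (g := fun p : ℝ × ballR s => twistClass s t p.1 p.2)
    (continuous_twistClass (s := s) (t := t)).continuousAt
    ((harg.add (continuousAt_const (y := arg z₀))).prodMk
      (continuous_sndBall hs ht).continuousAt)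
  exact hcont.congr (Filter.Eventually.of_forall fun x => (hbranch x).symm)

lemma sqrt_eq_norm_fst (hs : s ≠ 0) (x : ellipsoidR s t) :
    √(t - t / s * ‖(x : ℂ × ℂ).2‖ ^ 2) = ‖(x : ℂ × ℂ).1‖ := by
  have hE : s * ‖(x : ℂ × ℂ).1‖ ^ 2 + t * ‖(x : ℂ × ℂ).2‖ ^ 2 = s * t := x.2
  rw [← Real.sqrt_sq (norm_nonneg (x : ℂ × ℂ).1)]
  congr 1
  field_simp
  linarith

lemma orbitRelR_toEllipsoid_twist (hs : 0 < s) (ht : 0 < t) (x : ellipsoidR s t)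
    (hw : twist s t (arg (x : ℂ × ℂ).1) (x : ℂ × ℂ).2 ∈ ballR s) :
    orbitRelR s t (toEllipsoid hs ht ⟨_, hw⟩) x := by
  refine ⟨arg (x : ℂ × ℂ).1 / (2 * π * s), Prod.ext ?_ ?_⟩
  · show (x : ℂ × ℂ).1 =
      expc _ * ((√(t - t / s * ‖twist s t _ (x : ℂ × ℂ).2‖ ^ 2) : ℝ) : ℂ)
    rw [twist, norm_expc_mul, sqrt_eq_norm_fst hs.ne' x,
      show s * (arg (x : ℂ × ℂ).1 / (2 * π * s)) = arg (x : ℂ × ℂ).1 / (2 * π) by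
        field_simp,
      expc_arg_div_mul_norm]
  · show (x : ℂ × ℂ).2 = expc _ * twist s t _ _
    rw [twist, ← mul_assoc, ← expc_add, show t * (arg (x : ℂ × ℂ).1 / (2 * π * s))
        + -(t / s) * (arg (x : ℂ × ℂ).1 / (2 * π)) = 0 by field_simp; ring,
      expc_zero, one_mul]

lemma chartMap_straighten (hs : 0 < s) (ht : 0 < t) :
    chartMap hs ht ∘ straighten hs ht = (UNR s t).restrictPreimage (Quot.mk (orbitRelR s t)) := by
  funext x
  exact Subtype.ext (Quot.sound (orbitRelR_toEllipsoid_twist hs ht _ _))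

noncomputable def chartHomeomorph (hs : 0 < s) (ht : 0 < t) : Quot (ballRelR' s t) ≃ₜ UNR s t :=
  IsHomeomorph.homeomorph (chartMap hs ht) <| isHomeomorph_iff_isQuotientMap_injective.2
    ⟨.of_comp (continuous_straighten hs ht) (continuous_chartMap hs ht)
      (chartMap_straighten hs ht ▸ isQuotientMap_quot_mk.restrictPreimage_isOpen isOpen_UNR),
    chartMap_injective hs ht⟩

end QuasisphereChart

theorem quasisphere_chart_N_general (s t : ℝ) (hs : 0 < s) (ht : 0 < t) :
    (∀ w : ℂ, w ∈ ballR s → ∀ k : ℤ, expc ((k : ℝ) * (t / s)) * w ∈ ballR s) ∧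
    ∃ h : Quot (ballRelR' s t) ≃ₜ UNR s t,
      ∀ (w : ℂ) (hw : w ∈ ballR s) (x : ellipsoidR s t),
        (x : ℂ × ℂ) = ((Real.sqrt (t - t / s * ‖w‖ ^ 2) : ℂ), w) →
          (h (Quot.mk (ballRelR' s t) ⟨w, hw⟩) : Quot (orbitRelR s t)) =
            Quot.mk (orbitRelR s t) x := by
  refine ⟨fun w hw k => (QuasisphereChart.expc_mul_mem_ballR_iff _ w).2 hw,
    QuasisphereChart.chartHomeomorph hs ht, fun w hw x hx => ?_⟩
  obtain rfl : QuasisphereChart.toEllipsoid hs ht ⟨w, hw⟩ = x := Subtype.ext hx.symm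
  rfl

/-- For `s, t > 0` with `s/t` irrational, the countable group `Γ_{t/s}` acts on `B(s)` by
complex multiplication, and the map `B(s)/Γ_{t/s} → U_N`, `[w] ↦ [√(t − (t/s)|w|²) : w]`,
is well defined and a homeomorphism (quotient topology on the source, subspace topology
from the quotient topology on the target). -/
theorem quasisphere_chart_N (s t : ℝ) (hs : 0 < s) (ht : 0 < t)
    (hst : Irrational (s / t)) :
    (∀ w : ℂ, w ∈ ballR s → ∀ k : ℤ, expc ((k : ℝ) * (t / s)) * w ∈ ballR s) ∧
    ∃ h : Quot (ballRelR' s t) ≃ₜ UNR s t,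
      ∀ (w : ℂ) (hw : w ∈ ballR s) (x : ellipsoidR s t),
        (x : ℂ × ℂ) = ((Real.sqrt (t - t / s * ‖w‖ ^ 2) : ℂ), w) →
          (h (Quot.mk (ballRelR' s t) ⟨w, hw⟩) : Quot (orbitRelR s t)) =
            Quot.mk (orbitRelR s t) x :=
  quasisphere_chart_N_general s t hs ht
end
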